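/- If a unitary W on n qubits (n ≥ 3) is a finite product W = Π_k exp(iθ_k R_{i_k j_k}) of exponentials of XY interactions, then for every m, det(Π^(m) W Π^(m)) = 1 (determinant taken on the range of Π^(m)), and moreover det(P_± W P_±) = 1 on the ±1 eigenspaces of X^{⊗n}. -/

import Mathlib

open Matrix
open scoped BigOperators

noncomputable section

/-- Computational basis states of `n` qubits: bit strings of length `n`. -/
abbrev QState (n : ℕ) := Fin n → Fin 2

/-- Matrices on the `n`-qubit Hilbert space `(ℂ²)^⊗n`, written in the computational basis. -/
abbrev QMat (n : ℕ) := Matrix (QState n) (QState n) ℂ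

/-- Matrix exponential, defined by its power series. -/
def mexp {m : Type*} [Fintype m] [DecidableEq m] (A : Matrix m m ℂ) : Matrix m m ℂ :=
  ∑' k : ℕ, ((k.factorial : ℂ)⁻¹) • A ^ k

/-- Hamming weight of a bit string. -/
def hamWeight {n : ℕ} (b : QState n) : ℕ := ∑ j, (b j : ℕ)

/-- Bitwise negation of a bit string. -/
def bflip {n : ℕ} (b : QState n) : QState n := fun j => b j + 1

/-- The operator `X^{⊗n}` flipping all qubits. -/
def XallMat (n : ℕ) : QMat n := fun b b' => if b' = bflip b then 1 else 0

/-- The projector `Π^(m)` onto the span of computational basis states of Hamming weight `m`. -/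
def ProjW (n m : ℕ) : QMat n :=
  Matrix.diagonal (fun b => if hamWeight b = m then 1 else 0)

/-- The eigenvalue `±1` of Pauli `Z` on a single-qubit basis label. -/
def zval : Fin 2 → ℂ := fun x => if x = 0 then 1 else -1

/-- Pauli `Z` acting on qubit `j` (tensored with identity elsewhere). -/
def Zmat (n : ℕ) (j : Fin n) : QMat n := Matrix.diagonal (fun b => zval (b j))

/-- The total Hamiltonian `Σ_j Z_j`. -/
def sumZ (n : ℕ) : QMat n := ∑ j, Zmat n j

/-- The XY interaction `R_{ij} = (X_i X_j + Y_i Y_j)/2 = |01⟩⟨10| + |10⟩⟨01|` on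
qubits `i, j`, tensored with identity elsewhere. -/
def Rmat (n : ℕ) (i j : Fin n) : QMat n := fun b b' =>
  if b i ≠ b j ∧ b' i = b j ∧ b' j = b i ∧ (∀ k, k ≠ i → k ≠ j → b' k = b k) then 1 else 0

/-- The determinant of (the block of) `A` on the range of a projector `P`,
computed as `det (P A P + (1 − P))`. -/
def sectorDet {ι : Type*} [Fintype ι] [DecidableEq ι] (P A : Matrix ι ι ℂ) : ℂ :=
  (P * A * P + (1 - P)).det

/-!
Every `R_{ij}` commutes with `Π^(m)` and with `X^{⊗n}`, and `R_{ij} Π^(m)`, `R_{ij}` and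
`R_{ij} X^{⊗n}` are traceless: `R_{ij}` only swaps the bits `i, j`, so it preserves Hamming
weight and has zero diagonal, and it fixes a third bit, which `X^{⊗n}` flips. For an
idempotent `P` commuting with `A`, the block matrix `P exp(A) P + (1 - P)` equals `exp (A P)`,
whose determinant is `exp (tr (A P)) = 1`; and `A ↦ P A P + (1 - P)` is multiplicative on the
commutant of `P`, so the determinant of the block of the whole product is 1 as well. The
projectors `(1 ± X^{⊗n}) / 2` are idempotent because `X^{⊗n}` is an involution.
-/

open NormedSpace Finset

section MatrixExp

variable {ι : Type*} [Fintype ι] [DecidableEq ι]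

-- `exp` depends only on the topology, so any normed-algebra structure on matrices will do.
attribute [local instance] Matrix.linftyOpNormedRing Matrix.linftyOpNormedAlgebra

lemma hasDerivAt_exp_smul_apply (A : Matrix ι ι ℂ) (t : ℂ) (i j : ι) :
    HasDerivAt (fun u : ℂ => exp (u • A) i j) ((exp (t • A) * A) i j) t :=
  (entryLinearMap ℂ ℂ i j).toContinuousLinearMap.hasFDerivAt.comp_hasDerivAt t
    (hasDerivAt_exp_smul_const A t)

lemma prod_erase_one_apply_perm_eq_zero {σ : Equiv.Perm ι} (hσ : σ ≠ 1) (i : ι) :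
    ∏ j ∈ univ.erase i, (1 : Matrix ι ι ℂ) (σ j) j = 0 := by
  obtain ⟨j, hj, hji⟩ := σ.support.exists_mem_ne
    (Nat.lt_of_lt_of_le one_lt_two (σ.two_le_card_support_of_ne_one hσ)) i
  exact prod_eq_zero (mem_erase.2 ⟨hji, mem_univ j⟩)
    (one_apply_ne (Equiv.Perm.mem_support.1 hj))

lemma hasDerivAt_det_exp_smul_zero (A : Matrix ι ι ℂ) :
    HasDerivAt (fun u : ℂ => (exp (u • A)).det) A.trace 0 := by
  have hterm (σ : Equiv.Perm ι) : HasDerivAt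
      (fun u : ℂ => (Equiv.Perm.sign σ : ℂ) * ∏ i, exp (u • A) (σ i) i)
      ((Equiv.Perm.sign σ : ℂ) *
        ∑ i, (∏ j ∈ univ.erase i, (1 : Matrix ι ι ℂ) (σ j) j) * A (σ i) i) 0 := by
    simpa using (HasDerivAt.fun_finsetProd fun i _ =>
      hasDerivAt_exp_smul_apply A 0 (σ i) i).const_mul (Equiv.Perm.sign σ : ℂ)
  simp_rw [det_apply']
  refine (HasDerivAt.fun_sum fun σ _ => hterm σ).congr_deriv ?_
  rw [sum_eq_single 1 (fun σ _ hσ => by simp [prod_erase_one_apply_perm_eq_zero hσ])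
    (fun h => absurd (mem_univ 1) h)]
  simp only [Equiv.Perm.sign_one, Units.val_one, Int.cast_one, one_mul]
  exact sum_congr rfl fun i _ => by simp [one_apply]

lemma det_exp (A : Matrix ι ι ℂ) : (exp A).det = Complex.exp A.trace := by
  -- `f` is multiplicative with `f' 0 = tr A`, hence `f' = tr A • f` and `f u * exp (-u tr A)` is
  -- constant.
  set f : ℂ → ℂ := fun u => (exp (u • A)).det
  have hf_add (s t : ℂ) : f (s + t) = f s * f t := by
    simp only [f]
    rw [add_smul, Matrix.exp_add_of_commute _ _ (((Commute.refl A).smul_left s).smul_right t),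
      det_mul]
  have hf_deriv (t : ℂ) : HasDerivAt f (f t * A.trace) t := by
    have h := HasDerivAt.comp_sub_const (f := fun u => f t * f u) t t
      (by simpa using (hasDerivAt_det_exp_smul_zero A).const_mul (f t))
    refine h.congr_of_eventuallyEq (.of_forall fun x => ?_)
    change f x = f t * f (x - t)
    rw [← hf_add, add_sub_cancel]
  set g : ℂ → ℂ := fun t => f t * Complex.exp (-(A.trace * t))
  have hg_deriv (t : ℂ) : HasDerivAt g 0 t := by
    have he : HasDerivAt (fun t : ℂ => Complex.exp (-(A.trace * t)))
        (Complex.exp (-(A.trace * t)) * -A.trace) t :=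
      (((hasDerivAt_id t).const_mul A.trace).neg.cexp).congr_deriv (by simp)
    exact ((hf_deriv t).mul he).congr_deriv (by ring)
  have hg : g 1 = g 0 := is_const_of_deriv_eq_zero
    (fun t => (hg_deriv t).differentiableAt) (fun t => (hg_deriv t).deriv) 1 0
  simp only [g, f, one_smul, mul_one, zero_smul, exp_zero, det_one, mul_zero, neg_zero,
    Complex.exp_zero] at hg
  rw [eq_inv_of_mul_eq_one_left hg, Complex.exp_neg, inv_inv]

variable {P : Matrix ι ι ℂ}

lemma exp_mul_of_isIdempotentElem (hP : IsIdempotentElem P) {A : Matrix ι ι ℂ}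
    (hA : Commute P A) : exp (A * P) = exp A * P + (1 - P) := by
  have hterm : (fun k : ℕ => (k.factorial⁻¹ : ℂ) • (A * P) ^ k) =
      fun k => (k.factorial⁻¹ : ℂ) • A ^ k * P + if k = 0 then 1 - P else 0 := by
    funext k
    cases k with
    | zero => simp
    | succ k => simp [hA.symm.mul_pow, hP.pow_succ_eq]
  have h := exp_series_hasSum_exp' (𝕂 := ℂ) (A * P)
  rw [hterm] at h
  exact h.unique (((exp_series_hasSum_exp' A).mul_right P).add (hasSum_ite_eq 0 (1 - P)))

lemma sectorDet_of_commute (hP : IsIdempotentElem P) {A : Matrix ι ι ℂ} (hA : Commute P A) :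
    sectorDet P A = (A * P + (1 - P)).det := by
  rw [sectorDet, hA.eq, mul_assoc, hP.eq]

lemma sectorDet_one (hP : IsIdempotentElem P) : sectorDet P 1 = 1 := by
  rw [sectorDet_of_commute hP (Commute.one_right P), one_mul, add_sub_cancel, det_one]

lemma sectorDet_mul (hP : IsIdempotentElem P) {A B : Matrix ι ι ℂ} (hA : Commute P A)
    (hB : Commute P B) : sectorDet P (A * B) = sectorDet P A * sectorDet P B := by
  rw [sectorDet_of_commute hP hA, sectorDet_of_commute hP hB,
    sectorDet_of_commute hP (hA.mul_right hB), ← det_mul]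
  have hPQ : P * (1 - P) = 0 := by rw [mul_sub, mul_one, hP.eq, sub_self]
  have hQP : (1 - P) * P = 0 := by rw [sub_mul, one_mul, hP.eq, sub_self]
  have hQB : (1 - P) * B = B * (1 - P) := ((Commute.one_left B).sub_left hB).eq
  congr 1
  symm
  calc (A * P + (1 - P)) * (B * P + (1 - P))
      = A * (P * B) * P + A * (P * (1 - P)) + (1 - P) * B * P + (1 - P) * (1 - P) := by
        noncomm_ring
    _ = A * B * (P * P) + A * (P * (1 - P)) + B * ((1 - P) * P) + (1 - P) * (1 - P) := by
        rw [hB.eq, hQB]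
        noncomm_ring
    _ = A * B * P + (1 - P) := by
        rw [hP.eq, hPQ, hQP, hP.one_sub.eq, mul_zero, mul_zero, add_zero, add_zero]

lemma sectorDet_exp (hP : IsIdempotentElem P) {A : Matrix ι ι ℂ} (hA : Commute P A) :
    sectorDet P (exp A) = Complex.exp (A * P).trace := by
  rw [sectorDet_of_commute hP hA.exp_right, ← exp_mul_of_isIdempotentElem hP hA, det_exp]

lemma sectorDet_prod_exp_eq_one (hP : IsIdempotentElem P) (l : List (Matrix ι ι ℂ))
    (hl : ∀ A ∈ l, Commute P A ∧ (A * P).trace = 0) : sectorDet P (l.map exp).prod = 1 := by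
  refine (List.prod_induction (fun B => Commute P B ∧ sectorDet P B = 1)
    (fun B C hB hC => ⟨hB.1.mul_right hC.1,
      by rw [sectorDet_mul hP hB.1 hC.1, hB.2, hC.2, one_mul]⟩)
    ⟨Commute.one_right P, sectorDet_one hP⟩ ?_).2
  intro B hB
  obtain ⟨A, hA, rfl⟩ := List.mem_map.1 hB
  obtain ⟨hPA, htr⟩ := hl A hA
  exact ⟨hPA.exp_right, by rw [sectorDet_exp hP hPA, htr, Complex.exp_zero]⟩

end MatrixExp

lemma isIdempotentElem_half_one_add {A : Type*} [Ring A] [Algebra ℂ A] {Y : A} (hY : Y * Y = 1) :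
    IsIdempotentElem ((2 : ℂ)⁻¹ • (1 + Y)) := by
  have hsq : (1 + Y) * (1 + Y) = (2 : ℂ) • (1 + Y) := by
    rw [two_smul, mul_add, add_mul, add_mul, hY, one_mul, mul_one, one_mul]
    abel
  rw [IsIdempotentElem, smul_mul_smul_comm, hsq, smul_smul]
  norm_num

section XY

variable {n : ℕ}

lemma mexp_eq_exp {ι : Type*} [Fintype ι] [DecidableEq ι] (A : Matrix ι ι ℂ) :
    mexp A = exp A := by
  rw [exp_eq_tsum ℂ]
  rfl

lemma hamWeight_comp_perm (b : QState n) (σ : Equiv.Perm (Fin n)) :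
    hamWeight (b ∘ σ) = hamWeight b :=
  Equiv.sum_comp σ fun j => (b j : ℕ)

lemma eq_comp_swap_of_Rmat_ne_zero {i j : Fin n} {b b' : QState n} (h : Rmat n i j b b' ≠ 0) :
    b' = b ∘ Equiv.swap i j := by
  obtain ⟨-, hi, hj, hk⟩ :
      b i ≠ b j ∧ b' i = b j ∧ b' j = b i ∧ ∀ k, k ≠ i → k ≠ j → b' k = b k :=
    by_contra fun hc => h (if_neg hc)
  funext k
  rcases eq_or_ne k i with rfl | hki
  · simp [hi]
  rcases eq_or_ne k j with rfl | hkj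
  · simp [hj]
  simp [Equiv.swap_apply_of_ne_of_ne hki hkj, hk k hki hkj]

lemma Rmat_apply_self (i j : Fin n) (b : QState n) : Rmat n i j b b = 0 :=
  if_neg fun ⟨hne, heq, _⟩ => hne heq

lemma bflip_bflip (b : QState n) : bflip (bflip b) = b := by
  have h (x : Fin 2) : x + 1 + 1 = x := by decide +revert
  exact funext fun k => h (b k)

lemma Rmat_apply_bflip (hn : 3 ≤ n) (i j : Fin n) (b : QState n) :
    Rmat n i j b (bflip b) = 0 := by
  obtain ⟨k, -, hk⟩ := exists_mem_notMem_of_card_lt_card (s := {i, j}) (t := univ)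
    (by rw [card_univ, Fintype.card_fin]; exact (card_le_two).trans_lt hn)
  rw [mem_insert, mem_singleton, not_or] at hk
  have hflip (x : Fin 2) : x + 1 ≠ x := by decide +revert
  exact if_neg fun ⟨_, _, _, hrest⟩ => hflip (b k) (hrest k hk.1 hk.2)

lemma isIdempotentElem_ProjW (n m : ℕ) : IsIdempotentElem (ProjW n m) := by
  rw [IsIdempotentElem, ProjW, diagonal_mul_diagonal]
  congr 1
  funext b
  split_ifs <;> simp

lemma commute_ProjW_Rmat (m : ℕ) (i j : Fin n) : Commute (ProjW n m) (Rmat n i j) := by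
  ext b b'
  rw [ProjW, diagonal_mul, mul_diagonal]
  by_cases h : Rmat n i j b b' = 0
  · rw [h, mul_zero, zero_mul]
  · rw [eq_comp_swap_of_Rmat_ne_zero h, hamWeight_comp_perm, mul_comm]

lemma trace_Rmat_mul_ProjW (m : ℕ) (i j : Fin n) : (Rmat n i j * ProjW n m).trace = 0 :=
  sum_eq_zero fun b _ => by rw [diag_apply, ProjW, mul_diagonal, Rmat_apply_self, zero_mul]

variable (n) in
def bflipPerm : Equiv.Perm (QState n) := Function.Involutive.toPerm bflip bflip_bflip

@[simp]
lemma coe_bflipPerm : ⇑(bflipPerm n) = bflip := rfl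

@[simp]
lemma bflipPerm_symm : (bflipPerm n).symm = bflipPerm n := Function.Involutive.toPerm_symm _

lemma XallMat_eq_toMatrix : XallMat n = (bflipPerm n).toPEquiv.toMatrix := by
  ext b b'
  simp [XallMat, PEquiv.toMatrix_apply, eq_comm]

lemma XallMat_mul_self : XallMat n * XallMat n = 1 := by
  rw [XallMat_eq_toMatrix, PEquiv.toMatrix_toPEquiv_mul]
  ext b b'
  simp [PEquiv.toMatrix_apply, one_apply, bflip_bflip]

lemma Rmat_bflip_bflip (i j : Fin n) (b b' : QState n) :
    Rmat n i j (bflip b) (bflip b') = Rmat n i j b b' := by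
  simp only [Rmat, bflip, ne_eq, add_left_inj]

lemma commute_XallMat_Rmat (i j : Fin n) : Commute (XallMat n) (Rmat n i j) := by
  rw [Commute, SemiconjBy, XallMat_eq_toMatrix, PEquiv.toMatrix_toPEquiv_mul,
    PEquiv.mul_toMatrix_toPEquiv]
  ext b b'
  simp [← Rmat_bflip_bflip i j b, bflip_bflip]

lemma trace_Rmat_mul_XallMat (hn : 3 ≤ n) (i j : Fin n) :
    (Rmat n i j * XallMat n).trace = 0 := by
  rw [XallMat_eq_toMatrix, PEquiv.mul_toMatrix_toPEquiv]
  exact sum_eq_zero fun b _ => Rmat_apply_bflip hn i j b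

lemma trace_Rmat (i j : Fin n) : (Rmat n i j).trace = 0 :=
  sum_eq_zero fun b _ => Rmat_apply_self i j b

lemma sectorDet_prod_exp_Rmat_eq_one {P : QMat n} (hP : IsIdempotentElem P)
    (hPR : ∀ i j, Commute P (Rmat n i j)) (htr : ∀ i j, (Rmat n i j * P).trace = 0)
    (L : List (ℝ × Fin n × Fin n)) :
    sectorDet P (L.map fun x => mexp ((Complex.I * x.1) • Rmat n x.2.1 x.2.2)).prod = 1 := by
  have hmap : (L.map fun x => mexp ((Complex.I * x.1) • Rmat n x.2.1 x.2.2)) =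
      (L.map fun x => (Complex.I * x.1) • Rmat n x.2.1 x.2.2).map exp := by
    simp only [List.map_map, Function.comp_def, mexp_eq_exp]
  rw [hmap]
  refine sectorDet_prod_exp_eq_one hP _ fun A hA => ?_
  obtain ⟨x, -, rfl⟩ := List.mem_map.1 hA
  exact ⟨(hPR _ _).smul_right _, by rw [smul_mul_assoc, trace_smul, htr, smul_zero]⟩

lemma sectorDet_half_one_add_prod_exp_Rmat_eq_one {Y : QMat n} (hY : Y * Y = 1)
    (hYR : ∀ i j, Commute Y (Rmat n i j)) (htr : ∀ i j, (Rmat n i j * Y).trace = 0)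
    (L : List (ℝ × Fin n × Fin n)) :
    sectorDet ((2 : ℂ)⁻¹ • (1 + Y))
      (L.map fun x => mexp ((Complex.I * x.1) • Rmat n x.2.1 x.2.2)).prod = 1 :=
  sectorDet_prod_exp_Rmat_eq_one (isIdempotentElem_half_one_add hY)
    (fun i j => ((Commute.one_left _).add_left (hYR i j)).smul_left _)
    (fun i j => by rw [mul_smul_comm, trace_smul, mul_add, mul_one, trace_add, trace_Rmat, htr,
      add_zero, smul_zero])
    L

end XY

theorem XY_product_sector_det_one_general (n : ℕ) (hn : 3 ≤ n)
    (L : List (ℝ × Fin n × Fin n))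
    (W : QMat n)
    (hW : W = (L.map (fun x => mexp ((Complex.I * x.1) • Rmat n x.2.1 x.2.2))).prod) :
    (∀ m : ℕ, sectorDet (ProjW n m) W = 1) ∧
    sectorDet ((2 : ℂ)⁻¹ • ((1 : QMat n) + XallMat n)) W = 1 ∧
    sectorDet ((2 : ℂ)⁻¹ • ((1 : QMat n) - XallMat n)) W = 1 := by
  subst hW
  refine ⟨fun m => sectorDet_prod_exp_Rmat_eq_one (isIdempotentElem_ProjW n m)
      (commute_ProjW_Rmat m) (trace_Rmat_mul_ProjW m) L,
    sectorDet_half_one_add_prod_exp_Rmat_eq_one XallMat_mul_self commute_XallMat_Rmat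
      (trace_Rmat_mul_XallMat hn) L, ?_⟩
  rw [sub_eq_add_neg]
  exact sectorDet_half_one_add_prod_exp_Rmat_eq_one (by rw [neg_mul_neg, XallMat_mul_self])
    (fun i j => (commute_XallMat_Rmat i j).neg_left)
    (fun i j => by rw [mul_neg, trace_neg, trace_Rmat_mul_XallMat hn, neg_zero]) L

/-- **Products of XY exponentials have unit sector determinants.** If `W` on `n ≥ 3`
qubits is a finite product of exponentials `exp(iθ R_{ij})` of XY interactions, then
the determinant of its block on every Hamming-weight sector is 1, and likewise the
determinants of its blocks on the `±1` eigenspaces of `X^{⊗n}` are 1. -/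
theorem XY_product_sector_det_one (n : ℕ) (hn : 3 ≤ n)
    (L : List (ℝ × Fin n × Fin n)) (hL : ∀ x ∈ L, x.2.1 ≠ x.2.2)
    (W : QMat n)
    (hW : W = (L.map (fun x => mexp ((Complex.I * x.1) • Rmat n x.2.1 x.2.2))).prod) :
    (∀ m : ℕ, sectorDet (ProjW n m) W = 1) ∧
    sectorDet ((2 : ℂ)⁻¹ • ((1 : QMat n) + XallMat n)) W = 1 ∧
    sectorDet ((2 : ℂ)⁻¹ • ((1 : QMat n) - XallMat n)) W = 1 :=
  XY_product_sector_det_one_general n hn L W hW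

end
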